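/- Let μ be a finitely supported generating probability measure on I. Then: (i) uniform irreducibility: there exists M ∈ ℕ such that for every pair x, y of adjacent vertices of the tree I there exists k ≤ M with p_k(x, y) > 0; (ii) bounded step-length: there exists N ∈ ℕ such that p(x, y) > 0 implies d(x, y) ≤ N; (iii) there exists δ > 0 such that p(x, y) > 0 implies p(x, y) ≥ δ. -/

import Mathlib

open Filter Topology MeasureTheory

/-- Words in the free monoid on two letters `α = true`, `β = false`. -/
abbrev Word := List Bool

/-- Conjugation: reverse the word and swap the two letters. -/
def wconj (x : Word) : Word := x.reverse.map (fun b => !b)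

/-- Fusion multiplicity `m(z; x, y)`: the number of triples `(x₀, w, y₀)` with
`x = x₀w`, `y = w̄y₀` and `z = x₀y₀`. -/
def fm (x y z : Word) : ℕ :=
  ((Finset.range (x.length + 1)).filter (fun k =>
    wconj (x.drop k) <+: y ∧ z = x.take k ++ y.drop (x.length - k))).card

/-- Maximal alternating blocks of a word. -/
def blocks : Word → List Word
  | [] => []
  | a :: rest =>
    match blocks rest with
    | [] => [[a]]
    | b :: bs => if b.head? = some a then [a] :: b :: bs else (a :: b) :: bs

/-- The quantum integer `[n]_q = (qⁿ - q⁻ⁿ)/(q - q⁻¹)`. -/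
noncomputable def qnum (q : ℝ) (n : ℕ) : ℝ := (q ^ n - q⁻¹ ^ n) / (q - q⁻¹)

/-- Quantum dimension `dim_q(x) = ∏ᵢ [|xᵢ|+1]_q` over the maximal alternating blocks. -/
noncomputable def dimq (q : ℝ) (x : Word) : ℝ :=
  ((blocks x).map (fun b => qnum q (b.length + 1))).prod

/-- Classical dimension `dim₁(x) = ∏ᵢ (|xᵢ|+1)` over the maximal alternating blocks. -/
def dim1 (x : Word) : ℕ := ((blocks x).map (fun b => b.length + 1)).prod
/-- The transition kernel of the random walk on `I` associated with a probability
measure `μ`: `p(x,y) = Σ_z μ(z)·m(z; x̄, y)·dim_q(y)/(dim_q(x)·dim_q(z))`. -/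
noncomputable def pker (q : ℝ) (μ : Word → ℝ) (x y : Word) : ℝ :=
  ∑ᶠ z : Word, μ z * (fm (wconj x) y z : ℝ) * dimq q y / (dimq q x * dimq q z)

/-- The `n`-step transition probabilities: `p₁ = p` and
`p_{n+1}(x,y) = Σ_u p_n(x,u)·p(u,y)`.  (The value at `n = 0` is irrelevant.) -/
noncomputable def pn (q : ℝ) (μ : Word → ℝ) : ℕ → Word → Word → ℝ
  | 0, _, _ => 0
  | 1, x, y => pker q μ x y
  | n + 2, x, y => ∑' u : Word, pn q μ (n + 1) x u * pker q μ u y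

/-- Adjacency in the Cayley tree of `ℕ ∗ ℕ`: each word `x` is adjacent to `xα` and `xβ`. -/
def adj (x y : Word) : Prop := (∃ a, y = x ++ [a]) ∨ (∃ a, x = y ++ [a])

/-- Length of the longest common prefix of two words. -/
def cpl : Word → Word → ℕ
  | a :: xs, b :: ys => if a = b then cpl xs ys + 1 else 0
  | _, _ => 0

/-- The graph distance on the Cayley tree of `ℕ ∗ ℕ`. -/
def tdist (x y : Word) : ℕ := x.length + y.length - 2 * cpl x y

/-!
A positive transition `p(x, y) > 0` comes from some `z` in the support of `μ` with
`x = p s`, `y = p t`, `z = s̄ t`. So one step moves at most `max |z|` in the tree, and positive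
transitions are invariant under left translation `x ↦ w x`: the paths that generation provides
from `ε` to `α`, `β` and back translate to paths of bounded length between any two neighbours.
For the lower bound, appending a letter multiplies `dim_q` by a factor in `[1, [2]_q]`
(by `[2]_q [n+1]_q = [n+2]_q + [n]_q`), so the term of `z` in `p(x, y)` is at least
`μ(z) [2]_q ^ (-2|z|)`.
-/

@[simp]
lemma wconj_append (x y : Word) : wconj (x ++ y) = wconj y ++ wconj x := by
  simp [wconj]

@[simp]
lemma wconj_wconj (x : Word) : wconj (wconj x) = x := by
  simp [wconj, Function.comp_def]

@[simp]
lemma length_wconj (x : Word) : (wconj x).length = x.length := by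
  simp [wconj]

lemma fm_wconj_pos_iff (x y z : Word) :
    0 < fm (wconj x) y z ↔ ∃ p s t, x = p ++ s ∧ y = p ++ t ∧ z = wconj s ++ t := by
  rw [fm, Finset.card_pos]
  constructor
  · rintro ⟨k, hk⟩
    simp only [Finset.mem_filter, Finset.mem_range] at hk
    obtain ⟨hk, ⟨t, rfl⟩, rfl⟩ := hk
    refine ⟨wconj ((wconj x).drop k), wconj ((wconj x).take k), t, ?_, rfl, ?_⟩
    · rw [← wconj_append, List.take_append_drop, wconj_wconj]
    · rw [wconj_wconj, List.drop_left' (by simp)]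
  · rintro ⟨p, s, t, rfl, rfl, rfl⟩
    refine ⟨s.length, ?_⟩
    simp [List.drop_left', List.take_left']

lemma length_le_cpl_append (p s t : Word) : p.length ≤ cpl (p ++ s) (p ++ t) := by
  induction p with
  | nil => simp
  | cons a p ih => simpa [cpl] using ih

lemma tdist_append_append_le (p s t : Word) : tdist (p ++ s) (p ++ t) ≤ s.length + t.length := by
  have := length_le_cpl_append p s t
  simp only [tdist, List.length_append]
  omega

lemma blocks_cons (a : Bool) (w : Word) :
    blocks (a :: w) = match blocks w with
      | [] => [[a]]
      | b :: bs => if b.head? = some a then [a] :: b :: bs else (a :: b) :: bs := rfl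

lemma blocks_concat (w : Word) (a : Bool) :
    blocks (w ++ [a]) = blocks w ++ [[a]] ∨
      ∃ bs b, blocks w = bs ++ [b] ∧ blocks (w ++ [a]) = bs ++ [b ++ [a]] := by
  induction w with
  | nil => exact .inl rfl
  | cons c w ih =>
    rw [List.cons_append, blocks_cons, blocks_cons]
    rcases ih with h | ⟨bs, b, hw, hwa⟩
    · rw [h]
      rcases hb : blocks w with _ | ⟨d, ds⟩
      · by_cases hac : a = c
        · simp [hac]
        · exact .inr ⟨[], [c], rfl, by simp [hac]⟩
      · left
        dsimp only [List.cons_append]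
        split_ifs <;> simp
    · rw [hw, hwa]
      rcases bs with _ | ⟨d, ds⟩
      · rcases b with _ | ⟨e, es⟩
        · by_cases hac : a = c
          · simp [hac]
          · exact .inr ⟨[], [c], by simp, by simp [hac]⟩
        · right
          by_cases hec : e = c
          · exact ⟨[[c]], e :: es, by simp [hec], by simp [hec]⟩
          · exact ⟨[], c :: e :: es, by simp [hec], by simp [hec]⟩
      · right
        dsimp only [List.cons_append]
        split_ifs
        · exact ⟨[c] :: d :: ds, b, rfl, rfl⟩
        · exact ⟨(c :: d) :: ds, b, rfl, rfl⟩

lemma qnum_two_mul (q : ℝ) (n : ℕ) : qnum q 2 * qnum q (n + 1) = qnum q (n + 2) + qnum q n := by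
  rcases eq_or_ne (q - q⁻¹) 0 with h | h
  · simp [qnum, h]
  · have hq : q * q⁻¹ = 1 := mul_inv_cancel₀ (by rintro rfl; simp at h)
    simp only [qnum, div_mul_div_comm, ← add_div]
    rw [div_eq_div_iff (mul_ne_zero h h) h]
    linear_combination (q - q⁻¹) ^ 2 * (q ^ n - q⁻¹ ^ n) * hq

lemma dimq_nil (q : ℝ) : dimq q [] = 1 := rfl

section QuantumDimension

variable {q : ℝ} (hq0 : 0 < q) (hq1 : q < 1)
include hq0 hq1

lemma self_lt_inv_of_lt_one : q < q⁻¹ :=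
  hq1.trans (one_lt_inv₀ hq0 |>.mpr hq1)

lemma qnum_nonneg (n : ℕ) : 0 ≤ qnum q n := by
  refine div_nonneg_of_nonpos (sub_nonpos.mpr ?_)
    (sub_nonpos.mpr (self_lt_inv_of_lt_one hq0 hq1).le)
  exact (pow_le_one₀ hq0.le hq1.le).trans (one_le_pow₀ (one_le_inv₀ hq0 |>.mpr hq1.le))

lemma qnum_le_qnum_succ (n : ℕ) : qnum q n ≤ qnum q (n + 1) := by
  refine div_le_div_of_nonpos_of_le (sub_nonpos.mpr (self_lt_inv_of_lt_one hq0 hq1).le)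
    (sub_le_sub ?_ ?_)
  · exact pow_le_pow_of_le_one hq0.le hq1.le n.le_succ
  · exact pow_le_pow_right₀ (one_le_inv₀ hq0 |>.mpr hq1.le) n.le_succ

lemma one_le_qnum_two : 1 ≤ qnum q 2 := by
  have hq : q - q⁻¹ ≠ 0 := sub_ne_zero.mpr (self_lt_inv_of_lt_one hq0 hq1).ne
  calc (1 : ℝ) = qnum q 1 := by simp [qnum, hq]
    _ ≤ qnum q 2 := qnum_le_qnum_succ hq0 hq1 1

lemma qnum_two_pos : 0 < qnum q 2 :=
  zero_lt_one.trans_le (one_le_qnum_two hq0 hq1)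

lemma qnum_add_two_le (n : ℕ) : qnum q (n + 2) ≤ qnum q 2 * qnum q (n + 1) := by
  rw [qnum_two_mul]
  linarith [qnum_nonneg hq0 hq1 n]

lemma prod_map_qnum_nonneg (l : List Word) :
    0 ≤ (l.map fun b => qnum q (b.length + 1)).prod :=
  List.prod_nonneg (by simp [qnum_nonneg hq0 hq1])

lemma dimq_le_dimq_concat (w : Word) (a : Bool) : dimq q w ≤ dimq q (w ++ [a]) := by
  rcases blocks_concat w a with h | ⟨bs, b, hw, hwa⟩
  · simp only [dimq, h, List.map_append, List.prod_append]
    exact le_mul_of_one_le_right (prod_map_qnum_nonneg hq0 hq1 _)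
      (by simpa using one_le_qnum_two hq0 hq1)
  · simp only [dimq, hw, hwa, List.map_append, List.prod_append]
    exact mul_le_mul_of_nonneg_left (by simpa using qnum_le_qnum_succ hq0 hq1 (b.length + 1))
      (prod_map_qnum_nonneg hq0 hq1 bs)

lemma dimq_concat_le (w : Word) (a : Bool) : dimq q (w ++ [a]) ≤ qnum q 2 * dimq q w := by
  rcases blocks_concat w a with h | ⟨bs, b, hw, hwa⟩
  · simp [dimq, h, mul_comm]
  · simp only [dimq, hw, hwa, List.map_append, List.prod_append, List.map_cons, List.map_nil,
      List.prod_cons, List.prod_nil, mul_one, List.length_append, List.length_singleton]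
    rw [mul_left_comm]
    exact mul_le_mul_of_nonneg_left (qnum_add_two_le hq0 hq1 b.length)
      (prod_map_qnum_nonneg hq0 hq1 bs)

lemma dimq_le_dimq_append (w u : Word) : dimq q w ≤ dimq q (w ++ u) := by
  induction u generalizing w with
  | nil => simp
  | cons a u ih =>
    rw [List.append_cons]
    exact (dimq_le_dimq_concat hq0 hq1 w a).trans (ih _)

lemma dimq_append_le (w u : Word) : dimq q (w ++ u) ≤ qnum q 2 ^ u.length * dimq q w := by
  induction u generalizing w with
  | nil => simp
  | cons a u ih =>
    rw [List.append_cons, List.length_cons, pow_succ, mul_assoc]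
    exact (ih _).trans (mul_le_mul_of_nonneg_left (dimq_concat_le hq0 hq1 w a)
      (pow_nonneg (qnum_nonneg hq0 hq1 2) _))

lemma one_le_dimq (w : Word) : 1 ≤ dimq q w := by
  simpa [dimq_nil] using dimq_le_dimq_append hq0 hq1 [] w

lemma dimq_le_pow_length (w : Word) : dimq q w ≤ qnum q 2 ^ w.length := by
  simpa [dimq_nil] using dimq_append_le hq0 hq1 [] w

lemma dimq_pos (w : Word) : 0 < dimq q w :=
  zero_lt_one.trans_le (one_le_dimq hq0 hq1 w)

lemma dimq_append_mul_dimq_le (p s t : Word) :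
    dimq q (p ++ s) * dimq q (wconj s ++ t) ≤
      qnum q 2 ^ (2 * (s.length + t.length)) * dimq q (p ++ t) := by
  have hx : dimq q (p ++ s) ≤ qnum q 2 ^ s.length * dimq q (p ++ t) :=
    (dimq_append_le hq0 hq1 p s).trans
      (mul_le_mul_of_nonneg_left (dimq_le_dimq_append hq0 hq1 p t)
        (pow_nonneg (qnum_nonneg hq0 hq1 2) _))
  have hz : dimq q (wconj s ++ t) ≤ qnum q 2 ^ (s.length + t.length) := by
    simpa using dimq_le_pow_length hq0 hq1 (wconj s ++ t)
  calc dimq q (p ++ s) * dimq q (wconj s ++ t)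
      ≤ (qnum q 2 ^ s.length * dimq q (p ++ t)) * qnum q 2 ^ (s.length + t.length) :=
        mul_le_mul hx hz (dimq_pos hq0 hq1 _).le (hx.trans' (dimq_pos hq0 hq1 _).le)
    _ ≤ qnum q 2 ^ (2 * (s.length + t.length)) * dimq q (p ++ t) := by
        rw [mul_right_comm, ← pow_add, two_mul]
        gcongr
        · exact (dimq_pos hq0 hq1 _).le
        · exact one_le_qnum_two hq0 hq1
        · omega

end QuantumDimension

lemma support_tsum_mul_subset {ι κ : Type*} (f : ι → ℝ) (g : ι → κ → ℝ) :
    (fun k => ∑' i, f i * g i k).support ⊆ ⋃ i ∈ f.support, (g i).support := by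
  intro k hk
  by_contra h
  simp only [Set.mem_iUnion, Function.mem_support, not_exists, not_not] at h
  refine hk ((tsum_congr fun i => ?_).trans tsum_zero)
  by_cases hi : f i = 0 <;> simp [hi, h i]

lemma tsum_mul_pos_iff {ι : Type*} {f g : ι → ℝ} (hf : f.support.Finite) (hf0 : ∀ i, 0 ≤ f i)
    (hg0 : ∀ i, 0 ≤ g i) : 0 < ∑' i, f i * g i ↔ ∃ i, 0 < f i ∧ 0 < g i := by
  constructor
  · intro h
    by_contra! hc
    have : ∀ i, f i * g i = 0 := fun i => by
      rcases (hf0 i).eq_or_lt with hi | hi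
      · rw [← hi, zero_mul]
      · rw [le_antisymm (hc i hi) (hg0 i), mul_zero]
    simp [this] at h
  · rintro ⟨i, hfi, hgi⟩
    have hs : Summable fun i => f i * g i :=
      summable_of_hasFiniteSupport (hf.subset fun i hi => left_ne_zero_of_mul hi)
    exact hs.tsum_pos (fun j => mul_nonneg (hf0 j) (hg0 j)) i (mul_pos hfi hgi)

section Kernel

variable {q : ℝ} {μ : Word → ℝ}

lemma exists_of_pker_ne_zero {x y : Word} (h : pker q μ x y ≠ 0) :
    ∃ z, μ z ≠ 0 ∧ 0 < fm (wconj x) y z := by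
  contrapose! h
  refine finsum_eq_zero_of_forall_eq_zero fun z => ?_
  rcases eq_or_ne (μ z) 0 with hz | hz
  · simp [hz]
  · simp [Nat.le_zero.mp (h z hz)]

lemma pker_summand_nonneg (hq0 : 0 < q) (hq1 : q < 1) (hμ0 : ∀ z, 0 ≤ μ z)
    (x y z : Word) :
    0 ≤ μ z * (fm (wconj x) y z : ℝ) * dimq q y / (dimq q x * dimq q z) :=
  div_nonneg (mul_nonneg (mul_nonneg (hμ0 z) (Nat.cast_nonneg _)) (dimq_pos hq0 hq1 y).le)
    (mul_pos (dimq_pos hq0 hq1 x) (dimq_pos hq0 hq1 z)).le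

lemma pker_nonneg (hq0 : 0 < q) (hq1 : q < 1) (hμ0 : ∀ z, 0 ≤ μ z) (x y : Word) :
    0 ≤ pker q μ x y :=
  finsum_nonneg (pker_summand_nonneg hq0 hq1 hμ0 x y)

lemma mul_inv_pow_le_pker (hq0 : 0 < q) (hq1 : q < 1) (hμ0 : ∀ z, 0 ≤ μ z)
    (hfin : {z : Word | μ z ≠ 0}.Finite) {x y z : Word} (h : 0 < fm (wconj x) y z) :
    μ z * (qnum q 2 ^ (2 * z.length))⁻¹ ≤ pker q μ x y := by
  have hsupp : (fun z => μ z * (fm (wconj x) y z : ℝ) * dimq q y / (dimq q x * dimq q z)).support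
      ⊆ {z | μ z ≠ 0} := fun z hz hμ => hz (by simp [hμ])
  refine le_trans ?_
    (single_le_finsum z (hfin.subset hsupp) (pker_summand_nonneg hq0 hq1 hμ0 x y))
  obtain ⟨p, s, t, rfl, rfl, rfl⟩ := (fm_wconj_pos_iff _ _ _).mp h
  have hfm : (1 : ℝ) ≤ fm (wconj (p ++ s)) (p ++ t) (wconj s ++ t) := by exact_mod_cast h
  have hdim : 0 < dimq q (p ++ s) * dimq q (wconj s ++ t) :=
    mul_pos (dimq_pos hq0 hq1 _) (dimq_pos hq0 hq1 _)
  have hratio : (qnum q 2 ^ (2 * (wconj s ++ t).length))⁻¹ ≤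
      dimq q (p ++ t) / (dimq q (p ++ s) * dimq q (wconj s ++ t)) := by
    rw [le_div_iff₀ hdim, inv_mul_le_iff₀ (pow_pos (qnum_two_pos hq0 hq1) _)]
    simpa using dimq_append_mul_dimq_le hq0 hq1 p s t
  rw [mul_assoc, mul_div_assoc, mul_div_assoc]
  refine mul_le_mul_of_nonneg_left (hratio.trans (le_mul_of_one_le_left ?_ hfm)) (hμ0 _)
  exact div_nonneg (dimq_pos hq0 hq1 _).le hdim.le

lemma pker_pos_append (hq0 : 0 < q) (hq1 : q < 1) (hμ0 : ∀ z, 0 ≤ μ z)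
    (hfin : {z : Word | μ z ≠ 0}.Finite) (w : Word) {x y : Word} (h : 0 < pker q μ x y) :
    0 < pker q μ (w ++ x) (w ++ y) := by
  obtain ⟨z, hz, hfm⟩ := exists_of_pker_ne_zero h.ne'
  obtain ⟨p, s, t, rfl, rfl, rfl⟩ := (fm_wconj_pos_iff _ _ _).mp hfm
  have hfm' : 0 < fm (wconj (w ++ (p ++ s))) (w ++ (p ++ t)) (wconj s ++ t) :=
    (fm_wconj_pos_iff _ _ _).mpr ⟨w ++ p, s, t, by simp, by simp, rfl⟩
  refine lt_of_lt_of_le ?_ (mul_inv_pow_le_pker hq0 hq1 hμ0 hfin hfm')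
  have := qnum_two_pos hq0 hq1
  have := (hμ0 _).lt_of_ne' hz
  positivity

lemma pker_support_finite (hfin : {z : Word | μ z ≠ 0}.Finite) (x : Word) :
    (pker q μ x).support.Finite := by
  have hprefix : {p : Word | p <+: x}.Finite :=
    (List.finite_toSet x.inits).subset fun p hp => (List.mem_inits p x).mpr hp
  refine ((hprefix.image2 (· ++ ·) (hfin.biUnion fun z _ =>
    (List.finite_toSet z.tails))).subset fun y hy => ?_)
  obtain ⟨z, hz, hfm⟩ := exists_of_pker_ne_zero hy
  obtain ⟨p, s, t, rfl, rfl, rfl⟩ := (fm_wconj_pos_iff _ _ _).mp hfm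
  exact ⟨p, List.prefix_append p s, t, Set.mem_biUnion hz ((List.mem_tails _ _).mpr
    (List.suffix_append _ t)), rfl⟩

lemma pn_nonneg (hq0 : 0 < q) (hq1 : q < 1) (hμ0 : ∀ z, 0 ≤ μ z) :
    ∀ n x y, 0 ≤ pn q μ n x y
  | 0, _, _ => le_rfl
  | 1, x, y => pker_nonneg hq0 hq1 hμ0 x y
  | n + 2, x, y => tsum_nonneg fun u =>
      mul_nonneg (pn_nonneg hq0 hq1 hμ0 (n + 1) x u) (pker_nonneg hq0 hq1 hμ0 u y)

lemma pn_support_finite (hfin : {z : Word | μ z ≠ 0}.Finite) :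
    ∀ n x, (pn q μ n x).support.Finite
  | 0, _ => by simp [Function.support, pn]
  | 1, x => pker_support_finite hfin x
  | n + 2, x => ((pn_support_finite hfin (n + 1) x).biUnion fun u _ =>
      pker_support_finite hfin u).subset (support_tsum_mul_subset _ _)

lemma pn_add_two_pos_iff (hq0 : 0 < q) (hq1 : q < 1) (hμ0 : ∀ z, 0 ≤ μ z)
    (hfin : {z : Word | μ z ≠ 0}.Finite) (n : ℕ) (x y : Word) :
    0 < pn q μ (n + 2) x y ↔ ∃ u, 0 < pn q μ (n + 1) x u ∧ 0 < pker q μ u y :=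
  tsum_mul_pos_iff (pn_support_finite hfin (n + 1) x) (pn_nonneg hq0 hq1 hμ0 (n + 1) x)
    (fun u => pker_nonneg hq0 hq1 hμ0 u y)

lemma pn_pos_append (hq0 : 0 < q) (hq1 : q < 1) (hμ0 : ∀ z, 0 ≤ μ z)
    (hfin : {z : Word | μ z ≠ 0}.Finite) (w : Word) :
    ∀ n {x y}, 0 < pn q μ n x y → 0 < pn q μ n (w ++ x) (w ++ y)
  | 0, _, _, h => absurd h (lt_irrefl 0)
  | 1, _, _, h => pker_pos_append hq0 hq1 hμ0 hfin w h
  | n + 2, x, y, h => by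
    obtain ⟨u, hxu, huy⟩ := (pn_add_two_pos_iff hq0 hq1 hμ0 hfin n x y).mp h
    exact (pn_add_two_pos_iff hq0 hq1 hμ0 hfin n _ _).mpr
      ⟨w ++ u, pn_pos_append hq0 hq1 hμ0 hfin w (n + 1) hxu,
        pker_pos_append hq0 hq1 hμ0 hfin w huy⟩

lemma exists_pn_pos_le_of_adj (hq0 : 0 < q) (hq1 : q < 1) (hμ0 : ∀ z, 0 ≤ μ z)
    (hfin : {z : Word | μ z ≠ 0}.Finite)
    (hgen : ∀ x y : Word, ∃ n : ℕ, 1 ≤ n ∧ 0 < pn q μ n x y) :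
    ∃ M : ℕ, ∀ x y : Word, adj x y → ∃ k : ℕ, 1 ≤ k ∧ k ≤ M ∧ 0 < pn q μ k x y := by
  choose n hn hpos using hgen
  obtain ⟨M, hM⟩ : ∃ M, ∀ a : Bool, n [] [a] ≤ M ∧ n [a] [] ≤ M :=
    ⟨max (max (n [] [true]) (n [] [false])) (max (n [true] []) (n [false] [])),
      fun a => by cases a <;> omega⟩
  refine ⟨M, ?_⟩
  rintro x y (⟨a, rfl⟩ | ⟨a, rfl⟩)
  · refine ⟨n [] [a], hn _ _, (hM a).1, ?_⟩
    simpa using pn_pos_append hq0 hq1 hμ0 hfin x _ (hpos [] [a])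
  · refine ⟨n [a] [], hn _ _, (hM a).2, ?_⟩
    simpa using pn_pos_append hq0 hq1 hμ0 hfin y _ (hpos [a] [])

lemma exists_tdist_le_of_pker_pos (hfin : {z : Word | μ z ≠ 0}.Finite) :
    ∃ N : ℕ, ∀ x y : Word, 0 < pker q μ x y → tdist x y ≤ N := by
  obtain ⟨N, hN⟩ := (hfin.image List.length).bddAbove
  refine ⟨N, fun x y h => ?_⟩
  obtain ⟨z, hz, hfm⟩ := exists_of_pker_ne_zero h.ne'
  obtain ⟨p, s, t, rfl, rfl, rfl⟩ := (fm_wconj_pos_iff _ _ _).mp hfm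
  calc tdist (p ++ s) (p ++ t) ≤ s.length + t.length := tdist_append_append_le p s t
    _ = (wconj s ++ t).length := by simp
    _ ≤ N := hN ⟨_, hz, rfl⟩

lemma exists_pos_le_pker_of_pos (hq0 : 0 < q) (hq1 : q < 1) (hμ0 : ∀ z, 0 ≤ μ z)
    (hfin : {z : Word | μ z ≠ 0}.Finite) :
    ∃ δ : ℝ, 0 < δ ∧ ∀ x y : Word, 0 < pker q μ x y → δ ≤ pker q μ x y := by
  obtain ⟨N, hN⟩ := (hfin.image List.length).bddAbove
  obtain ⟨m, hm0, hm⟩ := (Set.finite_singleton 0).exists_between' (hfin.image μ)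
    (by rintro _ rfl _ ⟨z, hz, rfl⟩; exact (hμ0 z).lt_of_ne' hz)
  have hD := qnum_two_pos hq0 hq1
  refine ⟨m * (qnum q 2 ^ (2 * N))⁻¹, ?_, fun x y h => ?_⟩
  · have := hm0 0 rfl
    positivity
  obtain ⟨z, hz, hfm⟩ := exists_of_pker_ne_zero h.ne'
  refine le_trans ?_ (mul_inv_pow_le_pker hq0 hq1 hμ0 hfin hfm)
  have hzN : z.length ≤ N := hN ⟨z, hz, rfl⟩
  exact mul_le_mul (hm _ ⟨z, hz, rfl⟩).le
    (inv_anti₀ (by positivity) (pow_le_pow_right₀ (one_le_qnum_two hq0 hq1) (by omega)))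
    (by positivity) (hμ0 z)

end Kernel

theorem walk_uniformly_irreducible_bounded_steps_general (q : ℝ) (hq0 : 0 < q) (hq1 : q < 1)
    (μ : Word → ℝ) (hμ0 : ∀ z, 0 ≤ μ z)
    (hfin : {z : Word | μ z ≠ 0}.Finite)
    (hgen : ∀ x y : Word, ∃ n : ℕ, 1 ≤ n ∧ 0 < pn q μ n x y) :
    (∃ M : ℕ, ∀ x y : Word, adj x y → ∃ k : ℕ, 1 ≤ k ∧ k ≤ M ∧ 0 < pn q μ k x y) ∧
    (∃ N : ℕ, ∀ x y : Word, 0 < pn q μ 1 x y → tdist x y ≤ N) ∧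
    (∃ δ : ℝ, 0 < δ ∧ ∀ x y : Word, 0 < pn q μ 1 x y → δ ≤ pn q μ 1 x y) :=
  ⟨exists_pn_pos_le_of_adj hq0 hq1 hμ0 hfin hgen, exists_tdist_le_of_pker_pos hfin,
    exists_pos_le_pker_of_pos hq0 hq1 hμ0 hfin⟩

/-- For a finitely supported generating probability measure `μ` on `I`:
(i) uniform irreducibility; (ii) bounded step-length; (iii) a uniform lower bound `δ > 0`
on the nonzero one-step transition probabilities. -/
theorem walk_uniformly_irreducible_bounded_steps (q : ℝ) (hq0 : 0 < q) (hq1 : q < 1)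
    (μ : Word → ℝ) (hμ0 : ∀ z, 0 ≤ μ z) (hμ1 : HasSum μ 1)
    (hfin : {z : Word | μ z ≠ 0}.Finite)
    (hgen : ∀ x y : Word, ∃ n : ℕ, 1 ≤ n ∧ 0 < pn q μ n x y) :
    (∃ M : ℕ, ∀ x y : Word, adj x y → ∃ k : ℕ, 1 ≤ k ∧ k ≤ M ∧ 0 < pn q μ k x y) ∧
    (∃ N : ℕ, ∀ x y : Word, 0 < pn q μ 1 x y → tdist x y ≤ N) ∧
    (∃ δ : ℝ, 0 < δ ∧ ∀ x y : Word, 0 < pn q μ 1 x y → δ ≤ pn q μ 1 x y) :=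
  walk_uniformly_irreducible_bounded_steps_general q hq0 hq1 μ hμ0 hfin hgen
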